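/- arXiv:1405.1741 — 3 statements merged into one kernel-verified Lean document; each statement's English description precedes it below -/
import Mathlib

section
/- If z(t) = (x(t), y(t)) solves the planar linear system x' = y, y' = -p(t)x, and w(t) = R(ψ(t))⁻¹ z(t) where R(ψ) is rotation by angle ψ and ψ(t) = -(1/2)(t + ∫₀ᵗ p(s) ds), then w satisfies the linear system w' = M(t) w with M(t) the symmetric traceless matrix [[r, s], [s, -r]] where r = (1/2)(1 - p(t)) sin(2ψ(t)) and s = (1/2)(1 - p(t)) cos(2ψ(t)). -/
open Real Matrix intervalIntegral

theorem stmt0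
    (p : ℝ → ℝ) (hp : Continuous p)
    (ψ : ℝ → ℝ) (hψ : ∀ t, ψ t = -(1/2) * (t + ∫ s in (0:ℝ)..t, p s))
    (P : ℝ → Matrix (Fin 2) (Fin 2) ℝ)
    (hP : ∀ t, P t = !![0, 1; -p t, 0])
    (R : ℝ → Matrix (Fin 2) (Fin 2) ℝ)
    (hR : ∀ t, R t = !![Real.cos (ψ t), -Real.sin (ψ t); Real.sin (ψ t), Real.cos (ψ t)])
    (z : ℝ → Fin 2 → ℝ)
    (hz : ∀ t, HasDerivAt z (P t *ᵥ z t) t)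
    (w : ℝ → Fin 2 → ℝ) (hw : ∀ t, w t = (R t)⁻¹ *ᵥ z t)
    (r s : ℝ → ℝ)
    (hr : ∀ t, r t = (1/2) * (1 - p t) * Real.sin (2 * ψ t))
    (hs : ∀ t, s t = (1/2) * (1 - p t) * Real.cos (2 * ψ t)) :
    ∀ t, HasDerivAt w (!![r t, s t; s t, -r t] *ᵥ w t) t := by
  intro t
  -- derivative of ψ
  have hψ' : HasDerivAt ψ (-(1/2) * (1 + p t)) t := by
    have h1 : HasDerivAt (fun u => ∫ s in (0:ℝ)..u, p s) (p t) t :=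
      (hp.integral_hasStrictDerivAt 0 t).hasDerivAt
    have h2 : HasDerivAt (fun u : ℝ => -(1/2) * (u + ∫ s in (0:ℝ)..u, p s))
        (-(1/2) * (1 + p t)) t := ((hasDerivAt_id t).add h1).const_mul _
    exact h2.congr_deriv rfl |>.congr_of_eventuallyEq (by filter_upwards with u; rw [hψ])
  -- inverse of R explicitly
  have hRinv : ∀ u, (R u)⁻¹ = !![Real.cos (ψ u), Real.sin (ψ u); -Real.sin (ψ u), Real.cos (ψ u)] := by
    intro u
    apply Matrix.inv_eq_right_inv
    rw [hR]
    ext i j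
    fin_cases i <;> fin_cases j <;>
      simp [Matrix.mul_apply, Fin.sum_univ_two] <;> nlinarith [Real.sin_sq_add_cos_sq (ψ u)]
  -- explicit components of w
  have hw' : ∀ u, w u = ![Real.cos (ψ u) * z u 0 + Real.sin (ψ u) * z u 1,
      -Real.sin (ψ u) * z u 0 + Real.cos (ψ u) * z u 1] := by
    intro u
    rw [hw, hRinv]
    ext i
    fin_cases i <;> simp [Matrix.mulVec, dotProduct, Fin.sum_univ_two]
  -- component derivatives of z
  have hz0 : HasDerivAt (fun u => z u 0) (z t 1) t := by
    have := (hasDerivAt_pi.1 (hz t)) 0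
    simpa [hP, Matrix.mulVec, dotProduct, Fin.sum_univ_two] using this
  have hz1 : HasDerivAt (fun u => z u 1) (-p t * z t 0) t := by
    have := (hasDerivAt_pi.1 (hz t)) 1
    simpa [hP, Matrix.mulVec, dotProduct, Fin.sum_univ_two] using this
  have hcos : HasDerivAt (fun u => Real.cos (ψ u)) (-Real.sin (ψ t) * (-(1/2) * (1 + p t))) t :=
    (Real.hasDerivAt_cos (ψ t)).comp t hψ'
  have hsin : HasDerivAt (fun u => Real.sin (ψ u)) (Real.cos (ψ t) * (-(1/2) * (1 + p t))) t :=
    (Real.hasDerivAt_sin (ψ t)).comp t hψ'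
  have h0 : HasDerivAt (fun u => Real.cos (ψ u) * z u 0 + Real.sin (ψ u) * z u 1)
      ((-Real.sin (ψ t) * (-(1/2) * (1 + p t))) * z t 0 + Real.cos (ψ t) * z t 1
        + ((Real.cos (ψ t) * (-(1/2) * (1 + p t))) * z t 1 + Real.sin (ψ t) * (-p t * z t 0))) t :=
    (hcos.mul hz0).add (hsin.mul hz1)
  have h1 : HasDerivAt (fun u => -Real.sin (ψ u) * z u 0 + Real.cos (ψ u) * z u 1)
      ((-(Real.cos (ψ t) * (-(1/2) * (1 + p t)))) * z t 0 + -Real.sin (ψ t) * z t 1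
        + ((-Real.sin (ψ t) * (-(1/2) * (1 + p t))) * z t 1 + Real.cos (ψ t) * (-p t * z t 0))) t :=
    (((hsin.neg).mul hz0)).add (hcos.mul hz1)
  have key : HasDerivAt w
      (![(-Real.sin (ψ t) * (-(1/2) * (1 + p t))) * z t 0 + Real.cos (ψ t) * z t 1
        + ((Real.cos (ψ t) * (-(1/2) * (1 + p t))) * z t 1 + Real.sin (ψ t) * (-p t * z t 0)),
        (-(Real.cos (ψ t) * (-(1/2) * (1 + p t)))) * z t 0 + -Real.sin (ψ t) * z t 1
        + ((-Real.sin (ψ t) * (-(1/2) * (1 + p t))) * z t 1 + Real.cos (ψ t) * (-p t * z t 0))]) t := by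
    apply HasDerivAt.congr_of_eventuallyEq _ (by filter_upwards with u; rw [hw'])
    apply hasDerivAt_pi.2
    intro i
    fin_cases i
    · simpa using h0
    · simpa using h1
  convert key using 1
  ext i
  have hpyth := Real.sin_sq_add_cos_sq (ψ t)
  have hs2 := Real.sin_two_mul (ψ t)
  have hc2 := Real.cos_two_mul (ψ t)
  fin_cases i <;>
    simp [Matrix.mulVec, dotProduct, Fin.sum_univ_two, hw', hr, hs] <;>
    rw [hs2, hc2]
  · linear_combination ((1 - p t) * Real.cos (ψ t) * z t 1) * hpyth
  · linear_combination ((1 - p t) * Real.cos (ψ t) * z t 0) * hpyth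
end

section
/- Suppose (u, v) solves u' = ru + sv, v' = su - rv with (u,v) never zero, and α is a differentiable argument function of u + iv. Then θ(t) := 2α(t) satisfies the bicycle equation θ' = Y' cos θ - X' sin θ, where X'(t) = 2r(t) and Y'(t) = 2s(t). -/
/-! Write `(u, v) = ρ (cos α, sin α)` with `ρ = √(u² + v²) > 0`. Differentiating the identity
`v cos α - u sin α = 0` gives `ρ α' = v' cos α - u' sin α`, and for the linear system this is
`ρ (s cos 2α - r sin 2α)`. -/

open Real

theorem hasDerivAt_angle_of_polar {u v ρ α : ℝ → ℝ} {u' v' t : ℝ}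
    (hu : HasDerivAt u u' t) (hv : HasDerivAt v v' t) (hα : DifferentiableAt ℝ α t)
    (hu_polar : ∀ x, u x = ρ x * cos (α x)) (hv_polar : ∀ x, v x = ρ x * sin (α x))
    (hρ : ρ t ≠ 0) :
    HasDerivAt α ((v' * cos (α t) - u' * sin (α t)) / ρ t) t := by
  set α' := deriv α t
  have hcross : (fun x => v x * cos (α x) - u x * sin (α x)) = fun _ => 0 := by
    funext x
    rw [hu_polar, hv_polar]
    ring
  have hderiv : HasDerivAt (fun x => v x * cos (α x) - u x * sin (α x))
      (v' * cos (α t) + v t * (-sin (α t) * α') - (u' * sin (α t) + u t * (cos (α t) * α'))) t :=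
    (hv.mul hα.hasDerivAt.cos).sub (hu.mul hα.hasDerivAt.sin)
  rw [hcross] at hderiv
  have hzero := (hasDerivAt_const t (0 : ℝ)).unique hderiv
  have hα' : α' = (v' * cos (α t) - u' * sin (α t)) / ρ t := by
    rw [eq_div_iff hρ]
    rw [hu_polar, hv_polar] at hzero
    linear_combination hzero - ρ t * α' * sin_sq_add_cos_sq (α t)
  exact hα' ▸ hα.hasDerivAt

theorem polar_of_cos_sin {x y a : ℝ} (h : 0 < x ^ 2 + y ^ 2)
    (hc : cos a = x / √(x ^ 2 + y ^ 2)) (hs : sin a = y / √(x ^ 2 + y ^ 2)) :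
    x = √(x ^ 2 + y ^ 2) * cos a ∧ y = √(x ^ 2 + y ^ 2) * sin a := by
  have hρ : √(x ^ 2 + y ^ 2) ≠ 0 := (sqrt_pos.mpr h).ne'
  exact ⟨by rw [hc, mul_div_cancel₀ _ hρ], by rw [hs, mul_div_cancel₀ _ hρ]⟩

theorem stmt3_general
    (r s u v α : ℝ → ℝ)
    (hu : ∀ t, HasDerivAt u (r t * u t + s t * v t) t)
    (hv : ∀ t, HasDerivAt v (s t * u t - r t * v t) t)
    (hpos : ∀ t, u t ^ 2 + v t ^ 2 > 0)
    (hcos : ∀ t, Real.cos (α t) = u t / Real.sqrt (u t ^ 2 + v t ^ 2))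
    (hsin : ∀ t, Real.sin (α t) = v t / Real.sqrt (u t ^ 2 + v t ^ 2))
    (hα : Differentiable ℝ α)
    (θ : ℝ → ℝ) (hθ : ∀ t, θ t = 2 * α t) :
    ∀ t, HasDerivAt θ (2 * s t * Real.cos (θ t) - 2 * r t * Real.sin (θ t)) t := by
  intro t
  set ρ := fun x => √(u x ^ 2 + v x ^ 2)
  have hu_polar x : u x = ρ x * cos (α x) := (polar_of_cos_sin (hpos x) (hcos x) (hsin x)).1
  have hv_polar x : v x = ρ x * sin (α x) := (polar_of_cos_sin (hpos x) (hcos x) (hsin x)).2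
  have hρ : ρ t ≠ 0 := (sqrt_pos.mpr (hpos t)).ne'
  clear_value ρ
  have hα' := hasDerivAt_angle_of_polar (hu t) (hv t) (hα t) hu_polar hv_polar hρ
  rw [funext hθ]
  refine (hα'.const_mul 2).congr_deriv ?_
  rw [hu_polar t, hv_polar t, cos_two_mul, sin_two_mul]
  field_simp
  linear_combination -s t * sin_sq_add_cos_sq (α t)

theorem stmt3
    (r s u v α X Y : ℝ → ℝ)
    (hr : Continuous r) (hs : Continuous s)
    (hu : ∀ t, HasDerivAt u (r t * u t + s t * v t) t)
    (hv : ∀ t, HasDerivAt v (s t * u t - r t * v t) t)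
    (hpos : ∀ t, u t ^ 2 + v t ^ 2 > 0)
    (hcos : ∀ t, Real.cos (α t) = u t / Real.sqrt (u t ^ 2 + v t ^ 2))
    (hsin : ∀ t, Real.sin (α t) = v t / Real.sqrt (u t ^ 2 + v t ^ 2))
    (hα : Differentiable ℝ α)
    (hX : ∀ t, HasDerivAt X (2 * r t) t)
    (hY : ∀ t, HasDerivAt Y (2 * s t) t)
    (θ : ℝ → ℝ) (hθ : ∀ t, θ t = 2 * α t) :
    ∀ t, HasDerivAt θ (2 * s t * Real.cos (θ t) - 2 * r t * Real.sin (θ t)) t :=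
  stmt3_general r s u v α hu hv hpos hcos hsin hα θ hθ
end

section
/- Let p : ℝ → ℝ be continuous, φ(t) = t + ∫₀ᵗ p(s) ds, and define X(t) = -∫₀ᵗ (1 - p(τ)) sin φ(τ) dτ, Y(t) = ∫₀ᵗ (1 - p(τ)) cos φ(τ) dτ. If x solves the Schrödinger equation x'' + p(t)x = 0 with (x(t), x'(t)) ≠ (0,0) for all t, and θ is a differentiable function with θ(t) = 2 arg(x(t) + i x'(t)) + φ(t) (where arg is a continuous branch), then θ solves the bicycle equation θ' = Y' cos θ - X' sin θ. -/
/-! Since `θ - φ = 2α`, the right-hand side is `(1 - p) cos 2α = (1 - p)(x² - x'²)/(x² + x'²)`.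
On the other side `θ' = 2α' + 1 + p`, and differentiating `cos α = x/r`, `sin α = x'/r` gives
`α' = (x x'' - x' x')/r² = -(p x² + x'²)/r²`, the derivative of `r` cancelling out; the two
expressions agree. -/

open Real intervalIntegral

theorem hasDerivAt_of_hasDerivAt_cos_sin {α : ℝ → ℝ} {c s t : ℝ}
    (hα : DifferentiableAt ℝ α t) (hc : HasDerivAt (fun u => cos (α u)) c t)
    (hs : HasDerivAt (fun u => sin (α u)) s t) :
    HasDerivAt α (cos (α t) * s - sin (α t) * c) t := by
  have hα' := hα.hasDerivAt
  suffices cos (α t) * s - sin (α t) * c = deriv α t from this ▸ hα'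
  rw [← hα'.cos.unique hc, ← hα'.sin.unique hs]
  linear_combination deriv α t * cos_sq_add_sin_sq (α t)

theorem hasDerivAt_of_cos_sin_eq_div_sqrt {α u v : ℝ → ℝ} {u' v' t : ℝ}
    (hα : DifferentiableAt ℝ α t) (hu : HasDerivAt u u' t) (hv : HasDerivAt v v' t)
    (hpos : 0 < u t ^ 2 + v t ^ 2)
    (hcos : ∀ s, cos (α s) = u s / √(u s ^ 2 + v s ^ 2))
    (hsin : ∀ s, sin (α s) = v s / √(u s ^ 2 + v s ^ 2)) :
    HasDerivAt α ((u t * v' - v t * u') / (u t ^ 2 + v t ^ 2)) t := by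
  have hq : HasDerivAt (fun s => u s ^ 2 + v s ^ 2) (2 * u t * u' + 2 * v t * v') t :=
    ((hu.pow 2).add (hv.pow 2)).congr_deriv (by norm_num)
  have hr := hq.sqrt hpos.ne'
  have hr0 : √(u t ^ 2 + v t ^ 2) ≠ 0 := (sqrt_pos.2 hpos).ne'
  have hc : HasDerivAt (fun s => cos (α s)) _ t := funext hcos ▸ hu.fun_div hr hr0
  have hs : HasDerivAt (fun s => sin (α s)) _ t := funext hsin ▸ hv.fun_div hr hr0
  convert hasDerivAt_of_hasDerivAt_cos_sin hα hc hs using 1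
  rw [hcos, hsin]
  have hsq := sq_sqrt hpos.le
  set r := √(u t ^ 2 + v t ^ 2)
  rw [← hsq]
  field_simp
  ring

theorem cos_two_mul_of_cos_eq_div_sqrt {a u v : ℝ} (hpos : 0 < u ^ 2 + v ^ 2)
    (hcos : cos a = u / √(u ^ 2 + v ^ 2)) :
    cos (2 * a) = (u ^ 2 - v ^ 2) / (u ^ 2 + v ^ 2) := by
  rw [cos_two_mul, hcos, div_pow, sq_sqrt hpos.le]
  field_simp
  ring

theorem stmt4
    (p x dx α φ θ X Y : ℝ → ℝ)
    (hp : Continuous p)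
    (hx : ∀ t, HasDerivAt x (dx t) t)
    (hx' : ∀ t, HasDerivAt dx (-(p t * x t)) t)
    (hpos : ∀ t, x t ^ 2 + dx t ^ 2 > 0)
    (hφ : ∀ t, φ t = t + ∫ s in (0:ℝ)..t, p s)
    (hcos : ∀ t, Real.cos (α t) = x t / Real.sqrt (x t ^ 2 + dx t ^ 2))
    (hsin : ∀ t, Real.sin (α t) = dx t / Real.sqrt (x t ^ 2 + dx t ^ 2))
    (hα : Differentiable ℝ α)
    (hθ : ∀ t, θ t = 2 * α t + φ t)
    (hX : ∀ t, X t = -∫ τ in (0:ℝ)..t, (1 - p τ) * Real.sin (φ τ))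
    (hY : ∀ t, Y t = ∫ τ in (0:ℝ)..t, (1 - p τ) * Real.cos (φ τ)) :
    ∀ t, HasDerivAt θ (deriv Y t * Real.cos (θ t) - deriv X t * Real.sin (θ t)) t := by
  intro t
  have hφ' : ∀ s, HasDerivAt φ (1 + p s) s := fun s => by
    rw [funext hφ]
    exact (hasDerivAt_id s).add (hp.integral_hasStrictDerivAt 0 s).hasDerivAt
  have hφc : Continuous φ := continuous_iff_continuousAt.2 fun s => (hφ' s).continuousAt
  have hY' : deriv Y t = (1 - p t) * cos (φ t) := by
    rw [funext hY]
    exact (((continuous_const.sub hp).mul (continuous_cos.comp hφc)).integral_hasStrictDerivAt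
      0 t).hasDerivAt.deriv
  have hX' : deriv X t = -((1 - p t) * sin (φ t)) := by
    rw [funext hX]
    exact (((continuous_const.sub hp).mul (continuous_sin.comp hφc)).integral_hasStrictDerivAt
      0 t).hasDerivAt.neg.deriv
  have hθ' : HasDerivAt θ
      (2 * ((x t * -(p t * x t) - dx t * dx t) / (x t ^ 2 + dx t ^ 2)) + (1 + p t)) t := by
    rw [funext hθ]
    exact ((hasDerivAt_of_cos_sin_eq_div_sqrt (hα t) (hx t) (hx' t) (hpos t) hcos hsin).const_mul
      2).add (hφ' t)
  convert hθ' using 1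
  calc deriv Y t * cos (θ t) - deriv X t * sin (θ t) = (1 - p t) * cos (θ t - φ t) := by
        rw [hY', hX', cos_sub]; ring
    _ = (1 - p t) * ((x t ^ 2 - dx t ^ 2) / (x t ^ 2 + dx t ^ 2)) := by
        rw [hθ, add_sub_cancel_right, cos_two_mul_of_cos_eq_div_sqrt (hpos t) (hcos t)]
    _ = _ := by
        have := (hpos t).ne'
        field_simp
        ring
end
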